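/- Let M be a map and let E0 be a straight edge of M none of whose extremities is a leaf. Then M \ E0 has one fewer edge and one more face than M, the same number of vertices, and its number of connected components either equals that of M or exceeds it by 1; consequently d(M \ E0) ∈ {d(M) − 2, d(M)}. -/

import Mathlib

/-! Write `t = e s`. Deleting the edge `{s, t}` changes the partner maps only at `s`, `t` and
their partners, so in each of the relations "same face", "same black vertex", "same white
vertex" and "same component" — each generated by some of the involutions `b`, `w`, `e` — the
classes other than that of `s` are untouched, while every edge-side left in the class of `s`
is joined, after the deletion, to `f s` for a generator `f` with `f s ≠ t`. So the class of
`s` either survives or splits into the classes of `b s` and `w s`; for a vertex only one of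
these is available (and no leaf means it is not emptied), so the vertex counts are unchanged.
For the face, `t` in even position means that walking from `b s` along the face one reaches
`b t` before `t`: the arc `b s, w b s, …, b t` is closed under the new pairings and does not
contain `w s`, so the face does split. -/

open Equiv Polynomial

open scoped Classical

noncomputable section

variable {α : Type*}

/-- `f` is a *pairing* of the finite set `S`: an involution of the ambient type which
moves exactly the elements of `S` (i.e., a fixpoint-free involution of `S`, extended by
the identity outside of `S`); the pairs of the pairing are the orbits `{a, f a}`. -/
def IsPairing (S : Finset α) (f : Equiv.Perm α) : Prop :=
  (∀ a, f (f a) = a) ∧ ∀ a, f a ≠ a ↔ a ∈ S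

/-- The pairing `P_{{s₁,s₂}}` obtained from the pairing `f` by removing the elements
`s₁, s₂` : if `{s₁,s₂}` is a pair of `f` it is simply deleted; otherwise the pairs
containing `s₁` and `s₂` are deleted and the partners `f s₁`, `f s₂` are matched
together. -/
def removeP (f : Equiv.Perm α) (s₁ s₂ : α) : Equiv.Perm α :=
  Equiv.swap s₁ s₂ * Equiv.swap s₁ (f s₂) * Equiv.swap s₂ (f s₁) * f

/-- `t` lies in the polygon of `L(b,w)` containing `s`, in *even position* with
respect to `s`: `t` is obtained from `s` by an odd alternating word in the
involutions `b` and `w`. -/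
def EvenPos (b w : Equiv.Perm α) (s t : α) : Prop :=
  ∃ j : ℤ, t = ((w * b) ^ j * b) s

/-- `t` lies in the polygon of `L(b,w)` containing `s`, in *odd position* with respect
to `s`: `t` is obtained from `s` by an even alternating word in the involutions
`b` and `w`. -/
def OddPos (b w : Equiv.Perm α) (s t : α) : Prop :=
  ∃ j : ℤ, t = ((w * b) ^ j) s

/-- `s` and `t` lie in the same polygon of `L(b,w)`. -/
def SameFace (b w : Equiv.Perm α) (s t : α) : Prop :=
  EvenPos b w s t ∨ OddPos b w s t

/-- The edge `{s,t}` is *straight*: both edge-sides lie in the same face,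
in even position. -/
def IsStraight (b w : Equiv.Perm α) (s t : α) : Prop :=
  SameFace b w s t ∧ EvenPos b w s t

/-- The edge `{s,t}` is *twisted*: both edge-sides lie in the same face,
in odd position. -/
def IsTwisted (b w : Equiv.Perm α) (s t : α) : Prop :=
  SameFace b w s t ∧ OddPos b w s t

/-- The edge `{s,t}` is an *interface* edge: its edge-sides lie in two
different faces. -/
def IsInterface (b w : Equiv.Perm α) (s t : α) : Prop :=
  ¬ SameFace b w s t

/-- The polygon (face) of `L(b,w)` containing `s`, as the set of its edge-sides. -/
def faceOf (S : Finset α) (b w : Equiv.Perm α) (s : α) : Finset α :=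
  S.filter (SameFace b w s)

/-- The collection of polygons (faces) of `L(b,w)`. -/
def faces (S : Finset α) (b w : Equiv.Perm α) : Finset (Finset α) :=
  S.image (faceOf S b w)

/-- The number of polygons (faces) of `L(b,w)`. -/
def numFaces (S : Finset α) (b w : Equiv.Perm α) : ℕ :=
  (faces S b w).card

/-- The *type* of the couple of pairings `(b,w)`: the multiset of half-lengths of the
polygons of `L(b,w)`. -/
def faceType (S : Finset α) (b w : Equiv.Perm α) : Multiset ℕ :=
  (faces S b w).val.map fun F => F.card / 2

/-- `s` and `t` lie in the same connected component of the map `(b,w,e)`: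
`t` is obtained from `s` by applying partner maps in `b`, `w`, `e` repeatedly. -/
def SameComponent (b w e : Equiv.Perm α) (s t : α) : Prop :=
  ∃ g ∈ Subgroup.closure ({b, w, e} : Set (Equiv.Perm α)), g s = t

/-- The number of connected components of the map `(S, b, w, e)`. -/
def numComponents (S : Finset α) (b w e : Equiv.Perm α) : ℕ :=
  (S.image fun s => S.filter (SameComponent b w e s)).card

/-- The number of vertices of the map `(S, b, w, e)`: black vertices are the polygons
of `L(b,e)`, white vertices are the polygons of `L(w,e)`. -/
def numVertices (S : Finset α) (b w e : Equiv.Perm α) : ℕ :=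
  numFaces S b e + numFaces S w e

/-- The number of edges of a map with edge-side set `S`. -/
def numEdges (S : Finset α) : ℕ := S.card / 2

/-- The Euler characteristic `χ(M) = |V(M)| - |E(M)| + |F(M)|` of the map
`M = (S, b, w, e)`. -/
def eulerChar (S : Finset α) (b w e : Equiv.Perm α) : ℤ :=
  (numVertices S b w e : ℤ) - (numEdges S : ℤ) + (numFaces S b w : ℤ)

/-- The quantity `d(M) = 2·(number of connected components of M) - χ(M)`. -/
def dInv (S : Finset α) (b w e : Equiv.Perm α) : ℤ :=
  2 * (numComponents S b w e : ℤ) - eulerChar S b w e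

/-- The edge `{s, e s}` of the map `(b, w, e)` is a *bridge*: either one of its
extremities is a leaf (the pair belongs to `b` or to `w` as well), or its two
extremities lie in different connected components of the map with this edge removed. -/
def IsBridge (b w e : Equiv.Perm α) (s : α) : Prop :=
  (b s = e s ∨ w s = e s) ∨
    ¬ SameComponent (removeP b s (e s)) (removeP w s (e s)) (removeP e s (e s))
        (b s) (w s)

/-- The weight of the edge `{s,t}` in the map with face structure given by `(b,w)`,
as a polynomial in the variable `γ` (over `ℚ`): `1` for a straight edge, `γ` for a
twisted edge, `1/2` for an interface edge. -/
def edgeWeight (b w : Equiv.Perm α) (s t : α) : Polynomial ℚ :=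
  if IsStraight b w s t then 1
  else if IsTwisted b w s t then Polynomial.X
  else Polynomial.C (1 / 2)

/-- The weight `w_{M,≺}` of a map `(b,w,e)` equipped with a history, the latter
encoded as the list of the edges in increasing order (each edge represented by one
of its edge-sides): the product of the weights of the edges, each weight being
computed in the map in which all previous edges have already been removed. -/
def histWeight : Equiv.Perm α → Equiv.Perm α → Equiv.Perm α → List α → Polynomial ℚ
  | _, _, _, [] => 1
  | b, w, e, s :: L =>
      edgeWeight b w s (e s) *
        histWeight (removeP b s (e s)) (removeP w s (e s)) (removeP e s (e s)) L

/-- `L` encodes a *history* (a linear order on the edges) of the map with edge-side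
set `S` and edge pairing `e`: it lists every edge exactly once, each edge being
represented by its smaller edge-side. -/
def IsHistory [LinearOrder α] (S : Finset α) (e : Equiv.Perm α) (L : List α) : Prop :=
  L.Nodup ∧ (∀ s ∈ L, s ∈ S ∧ s < e s) ∧ ∀ a ∈ S, a ∈ L ∨ e a ∈ L

/-- The *measure of non-orientability* `w_M` of the map `(S,b,w,e)`: the average of
`w_{M,≺}` over all `n!` histories `≺`, as a polynomial in the variable `γ` over `ℚ`. -/
def mapWeight [LinearOrder α] (S : Finset α) (b w e : Equiv.Perm α) : Polynomial ℚ :=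
  Polynomial.C (1 / ((numEdges S).factorial : ℚ)) *
    ∑ F ∈ (Fintype.piFinset fun _ : Fin (numEdges S) => S).filter
        (fun F => IsHistory S e (List.ofFn F)),
      histWeight b w e (List.ofFn F)

/-- The number of embeddings `N_M(λ)` of the underlying bipartite graph of the map
`(S,b,w,e)` into the Young diagram whose list of row lengths is `lam`: an embedding
maps black vertices (polygons of `L(b,e)`) to rows, white vertices (polygons of
`L(w,e)`) to columns, and each edge to the box at the corresponding intersection;
it is encoded by a pair of functions on edge-sides that are constant on vertices. -/
def NMap (lam : List ℕ) (S : Finset α) (b w e : Equiv.Perm α) : ℕ :=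
  Nat.card {fp : (α → ℕ) × (α → ℕ) //
    (∀ s, s ∉ S → fp.1 s = 0 ∧ fp.2 s = 0) ∧
    (∀ s ∈ S, fp.1 (b s) = fp.1 s ∧ fp.1 (e s) = fp.1 s) ∧
    (∀ s ∈ S, fp.2 (w s) = fp.2 s ∧ fp.2 (e s) = fp.2 s) ∧
    ∀ s ∈ S, fp.2 s < lam.getD (fp.1 s) 0}

/-- The orientability generating series `\widehat{Ch}^{(α)}_π(λ)`, where the face-type
`π` is realized by the fixed couple of pairings `(b,w)` of `S`, `lam` is the list of
row lengths of the Young diagram `λ`, and `a` is the Jack parameter `α`: the sum over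
all pairings `e` of `S` (i.e., over all maps of face-type `π`) of
`(-1/√α)^{|V_•(M)|} (√α)^{|V_∘(M)|} w_M N_M(λ)`, times the sign `(-1)^{ℓ(π)}`,
where `w_M` is evaluated at `γ = (1-α)/√α`. -/
def genSeries [Fintype α] [LinearOrder α] (lam : List ℕ) (S : Finset α)
    (b w : Equiv.Perm α) (a : ℝ) : ℝ :=
  (-1 : ℝ) ^ numFaces S b w *
    ∑ e ∈ Finset.univ.filter fun e : Equiv.Perm α => IsPairing S e,
      (-1 / Real.sqrt a) ^ numFaces S b e * (Real.sqrt a) ^ numFaces S w e *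
        Polynomial.aeval ((1 - a) / Real.sqrt a) (mapWeight S b w e) *
          (NMap lam S b w e : ℝ)

/-- The number of embeddings `N_G(λ)` of the bipartite graph `G` with black vertex set
`ι`, white vertex set `κ` and edge relation `Edg` into the Young diagram whose list of
row lengths is `lam`: black vertices are mapped to rows of `λ`, white vertices to
columns of `λ`, and every edge to the box at the corresponding intersection, which
must belong to `λ`. -/
def NGraph {ι κ : Type*} (lam : List ℕ) (Edg : ι → κ → Prop) : ℕ :=
  Nat.card {fp : (ι → ℕ) × (κ → ℕ) //
    (∀ u, 0 < lam.getD (fp.1 u) 0) ∧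
    (∀ v, ∃ i, fp.2 v < lam.getD i 0) ∧
    ∀ u v, Edg u v → fp.2 v < lam.getD (fp.1 u) 0}

open Function Relation Finset

section RemoveP

variable {f : Perm α} {s t x : α}

theorem removeP_apply_of_ne (hxs : x ≠ s) (hxt : x ≠ t) (hfxs : f x ≠ s) (hfxt : f x ≠ t) :
    removeP f s t x = f x := by
  have h1 : f x ≠ f s := fun h => hxs (f.injective h)
  have h2 : f x ≠ f t := fun h => hxt (f.injective h)
  simp [removeP, Perm.mul_apply, swap_apply_of_ne_of_ne, *]

theorem removeP_apply_left (hst : s ≠ t) (ht : f t ≠ t) : removeP f s t s = s := by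
  simp [removeP, Perm.mul_apply, swap_apply_of_ne_of_ne hst.symm ht.symm]

theorem removeP_apply_right (hst : s ≠ t) (ht : f t ≠ t) : removeP f s t t = t := by
  have h : f t ≠ f s := fun h => hst (f.injective h).symm
  simp [removeP, Perm.mul_apply, swap_apply_of_ne_of_ne ht h]

theorem removeP_apply_apply_left (hf : Involutive f) (hst : s ≠ t) (hs : f s ≠ s)
    (ht : f t ≠ t) (hfs : f s ≠ t) : removeP f s t (f s) = f t := by
  have hft : f t ≠ s := fun h => hfs (by rw [← h, hf])
  simp [removeP, Perm.mul_apply, hf s, swap_apply_of_ne_of_ne hst hs.symm,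
    swap_apply_of_ne_of_ne hft ht]

theorem removeP_apply_apply_right (hf : Involutive f) (hst : s ≠ t) (hs : f s ≠ s)
    (hfs : f s ≠ t) : removeP f s t (f t) = f s := by
  have h : f s ≠ f t := fun h => hst (f.injective h)
  simp [removeP, Perm.mul_apply, hf t, swap_apply_of_ne_of_ne hs h,
    swap_apply_of_ne_of_ne hs hfs]

theorem involutive_removeP (hf : Involutive f) (hst : s ≠ t) (hs : f s ≠ s) (ht : f t ≠ t) :
    Involutive (removeP f s t) := by
  intro x
  by_cases hxs : x = s
  · rw [hxs, removeP_apply_left hst ht, removeP_apply_left hst ht]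
  by_cases hxt : x = t
  · rw [hxt, removeP_apply_right hst ht, removeP_apply_right hst ht]
  by_cases hfxs : f x = s
  · have hx : x = f s := by rw [← hfxs, hf]
    have hfs : f s ≠ t := hx ▸ hxt
    rw [hx, removeP_apply_apply_left hf hst hs ht hfs, removeP_apply_apply_right hf hst hs hfs]
  by_cases hfxt : f x = t
  · have hx : x = f t := by rw [← hfxt, hf]
    have hft : f t ≠ s := hx ▸ hxs
    have hfs : f s ≠ t := fun h => hft (by rw [← h, hf])
    rw [hx, removeP_apply_apply_right hf hst hs hfs, removeP_apply_apply_left hf hst hs ht hfs]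
  rw [removeP_apply_of_ne hxs hxt hfxs hfxt, removeP_apply_of_ne hfxs hfxt (by rwa [hf])
    (by rwa [hf]), hf]

end RemoveP

section Pairing

variable {S : Finset α} {f : Perm α} {s t x y : α}

theorem IsPairing.apply_ne (hf : IsPairing S f) (hx : x ∈ S) : f x ≠ x := (hf.2 x).mpr hx

theorem IsPairing.apply_mem_iff (hf : IsPairing S f) : f x ∈ S ↔ x ∈ S := by
  rw [← hf.2, ← hf.2, hf.1, ne_comm]

theorem IsPairing.apply_mem (hf : IsPairing S f) (hx : x ∈ S) : f x ∈ S := hf.apply_mem_iff.mpr hx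

theorem IsPairing.mul_apply_mem_iff {g : Perm α} (hf : IsPairing S f) (hg : IsPairing S g) :
    (f * g) x ∈ S ↔ x ∈ S := by
  rw [Perm.mul_apply, hf.apply_mem_iff, hg.apply_mem_iff]

theorem IsPairing.involutive_and_apply_ne (hf : IsPairing S f) (hs : s ∈ S) (ht : t ∈ S) :
    Involutive f ∧ f s ≠ s ∧ f t ≠ t :=
  ⟨hf.1, hf.apply_ne hs, hf.apply_ne ht⟩

theorem IsPairing.involutive_removeP (hf : IsPairing S f) (hs : s ∈ S) (ht : t ∈ S)
    (hst : s ≠ t) : Involutive (removeP f s t) :=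
  _root_.involutive_removeP hf.1 hst (hf.apply_ne hs) (hf.apply_ne ht)

theorem zpow_apply_mem (hf : ∀ x, f x ∈ S ↔ x ∈ S) (k : ℤ) (hx : x ∈ S) : (f ^ k) x ∈ S := by
  simpa using ((f.subtypePerm hf ^ k) ⟨x, hx⟩).2

theorem Perm.SameCycle.exists_nat_pow_eq_of_mem (hf : ∀ x, f x ∈ S ↔ x ∈ S) (hx : x ∈ S)
    (hy : y ∈ S) (h : f.SameCycle x y) : ∃ n : ℕ, (f ^ n) x = y := by
  obtain ⟨n, hn⟩ := ((Perm.sameCycle_subtypePerm (h := hf) (x := ⟨x, hx⟩)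
    (y := ⟨y, hy⟩)).mpr h).exists_nat_pow_eq
  exact ⟨n, by simpa [Subtype.ext_iff] using hn⟩

end Pairing

def Reach (G : Set (Perm α)) : α → α → Prop :=
  ReflTransGen fun x y => ∃ f ∈ G, f x = y

section Reach

variable {G : Set (Perm α)} {x y : α}

theorem Reach.refl (x : α) : Reach G x x := ReflTransGen.refl

theorem Reach.single {f : Perm α} (hf : f ∈ G) (x : α) : Reach G x (f x) :=
  ReflTransGen.single ⟨f, hf, rfl⟩

theorem Reach.symm (hG : ∀ f ∈ G, Involutive f) (h : Reach G x y) : Reach G y x :=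
  reflTransGen_swap.mp <|
    ReflTransGen.mono (fun _ _ ⟨f, hf, hab⟩ => ⟨f, hf, by rw [← hab, hG f hf]⟩) _ _ h

theorem reach_equivalence (hG : ∀ f ∈ G, Involutive f) : Equivalence (Reach G) :=
  ⟨Reach.refl, Reach.symm hG, ReflTransGen.trans⟩

theorem Reach.of_closed {A : α → Prop} (hA : ∀ f ∈ G, ∀ x, A x → A (f x)) (h : Reach G x y)
    (hx : A x) : A y := by
  induction h with
  | refl => exact hx
  | tail _ hstep ih => obtain ⟨f, hf, rfl⟩ := hstep; exact hA f hf _ ih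

theorem exists_mem_closure_apply_eq_iff_reach (hG : ∀ f ∈ G, Involutive f) :
    (∃ g ∈ Subgroup.closure G, g x = y) ↔ Reach G x y := by
  constructor
  · rintro ⟨g, hg, rfl⟩
    induction hg using Subgroup.closure_induction generalizing x with
    | mem f hf => exact Reach.single hf x
    | one => exact Reach.refl x
    | mul g h _ _ hg hh => exact (hh (x := x)).trans hg
    | inv g _ hg => simpa using (hg (x := g⁻¹ x)).symm hG
  · intro h
    induction h with
    | refl => exact ⟨1, Subgroup.one_mem _, rfl⟩
    | tail _ hstep ih =>
      obtain ⟨g, hg, rfl⟩ := ih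
      obtain ⟨f, hf, rfl⟩ := hstep
      exact ⟨f * g, Subgroup.mul_mem _ (Subgroup.subset_closure hf) hg, rfl⟩

end Reach

section Faces

variable {b w e : Perm α}

theorem Perm.mul_self_eq_one_of_involutive {f : Perm α} (hf : Involutive f) : f * f = 1 :=
  Perm.ext hf

theorem Perm.inv_eq_self_of_involutive {f : Perm α} (hf : Involutive f) : f⁻¹ = f :=
  inv_eq_of_mul_eq_one_left (Perm.mul_self_eq_one_of_involutive hf)

theorem mul_zpow_mul_eq_zpow_neg_mul (hb : Involutive b) (hw : Involutive w) (j : ℤ) :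
    b * (w * b) ^ j = (w * b) ^ (-j) * b := by
  have hc : (w * b)⁻¹ = b * w := by
    rw [mul_inv_rev, Perm.inv_eq_self_of_involutive hb, Perm.inv_eq_self_of_involutive hw]
  rw [zpow_neg, ← inv_zpow, hc]
  exact SemiconjBy.zpow_right (mul_assoc b w b).symm j

theorem exists_zpow_of_mem_closure_pair (hb : Involutive b) (hw : Involutive w) {g : Perm α}
    (hg : g ∈ Subgroup.closure {b, w}) : ∃ j : ℤ, g = (w * b) ^ j ∨ g = (w * b) ^ j * b := by
  have hbb := Perm.mul_self_eq_one_of_involutive hb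
  have hconj := mul_zpow_mul_eq_zpow_neg_mul hb hw
  induction hg using Subgroup.closure_induction with
  | mem f hf =>
    rcases hf with rfl | rfl
    · exact ⟨0, Or.inr (by simp)⟩
    · exact ⟨1, Or.inr (by rw [zpow_one, mul_assoc, hbb, mul_one])⟩
  | one => exact ⟨0, Or.inl (by simp)⟩
  | mul g h _ _ hg hh =>
    obtain ⟨i, rfl | rfl⟩ := hg <;> obtain ⟨j, rfl | rfl⟩ := hh
    · exact ⟨i + j, Or.inl (zpow_add _ _ _).symm⟩
    · exact ⟨i + j, Or.inr (by rw [zpow_add, mul_assoc])⟩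
    · exact ⟨i - j, Or.inr (by rw [mul_assoc, hconj, ← mul_assoc, ← zpow_add, sub_eq_add_neg])⟩
    · exact ⟨i - j, Or.inl (by
        rw [mul_assoc, ← mul_assoc b, hconj, mul_assoc, hbb, mul_one, ← zpow_add,
          sub_eq_add_neg])⟩
  | inv g _ hg =>
    obtain ⟨j, rfl | rfl⟩ := hg
    · exact ⟨-j, Or.inl (zpow_neg _ _).symm⟩
    · exact ⟨j, Or.inr (by
        rw [mul_inv_rev, Perm.inv_eq_self_of_involutive hb, ← zpow_neg, hconj, neg_neg])⟩

theorem sameFace_iff_reach (hb : Involutive b) (hw : Involutive w) {x y : α} :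
    SameFace b w x y ↔ Reach {b, w} x y := by
  have hG : ∀ f ∈ ({b, w} : Set (Perm α)), Involutive f := by simp [hb, hw]
  rw [← exists_mem_closure_apply_eq_iff_reach hG]
  have hc : w * b ∈ Subgroup.closure {b, w} :=
    Subgroup.mul_mem _ (Subgroup.subset_closure (by simp)) (Subgroup.subset_closure (by simp))
  constructor
  · rintro (⟨j, rfl⟩ | ⟨j, rfl⟩)
    · exact ⟨_, Subgroup.mul_mem _ (Subgroup.zpow_mem _ hc j)
        (Subgroup.subset_closure (by simp)), rfl⟩
    · exact ⟨_, Subgroup.zpow_mem _ hc j, rfl⟩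
  · rintro ⟨g, hg, rfl⟩
    obtain ⟨j, rfl | rfl⟩ := exists_zpow_of_mem_closure_pair hb hw hg
    · exact Or.inr ⟨j, rfl⟩
    · exact Or.inl ⟨j, rfl⟩

theorem sameComponent_iff_reach (hb : Involutive b) (hw : Involutive w) (he : Involutive e)
    {x y : α} : SameComponent b w e x y ↔ Reach {b, w, e} x y :=
  exists_mem_closure_apply_eq_iff_reach (by simp [hb, hw, he])

end Faces

section Classes

variable {β γ : Type*} {S T : Finset α} {R R' : α → α → Prop}

theorem card_image_eq_card_image_of_eq_iff [DecidableEq β] [DecidableEq γ] {f : α → β}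
    {g : α → γ}
    (h : ∀ x ∈ S, ∀ y ∈ S, f x = f y ↔ g x = g y) : #(S.image f) = #(S.image g) := by
  set P := S.image fun x => (f x, g x)
  have hP : ∀ p ∈ P, ∀ q ∈ P, (p.1 = q.1 ↔ p.2 = q.2) := by
    rintro _ hp _ hq
    obtain ⟨x, hx, rfl⟩ := mem_image.mp hp
    obtain ⟨y, hy, rfl⟩ := mem_image.mp hq
    exact h x hx y hy
  have hfst : #(P.image Prod.fst) = #P := card_image_of_injOn fun p hp q hq hpq =>
    Prod.ext hpq ((hP p hp q hq).mp hpq)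
  have hsnd : #(P.image Prod.snd) = #P := card_image_of_injOn fun p hp q hq hpq =>
    Prod.ext ((hP p hp q hq).mpr hpq) hpq
  rw [image_image] at hfst hsnd
  exact hfst.trans hsnd.symm

theorem Equivalence.apply_eq_apply_iff (hR : Equivalence R) {x y : α} : R x = R y ↔ R x y :=
  ⟨fun h => (congrFun h y).mpr (hR.refl y),
    fun h => funext fun _ => propext ⟨hR.trans (hR.symm h), hR.trans h⟩⟩

theorem card_image_filter_eq_card_image (hR : Equivalence R) :
    #(S.image fun x => S.filter (R x)) = #(S.image R) := by
  refine card_image_eq_card_image_of_eq_iff fun x _ y hy => ?_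
  rw [hR.apply_eq_apply_iff]
  refine ⟨fun h => ?_, fun h => by rw [hR.apply_eq_apply_iff.mpr h]⟩
  have : y ∈ S.filter (R y) := mem_filter.mpr ⟨hy, hR.refl y⟩
  exact (mem_filter.mp (h ▸ this)).2

theorem card_image_filter_add_card_image_filter_not (hR : Equivalence R) {P : α → Prop}
    (hP : ∀ x ∈ S, ∀ y ∈ S, R x y → (P x ↔ P y)) :
    #((S.filter P).image R) + #((S.filter (¬P ·)).image R) = #(S.image R) := by
  rw [← card_union_of_disjoint, ← image_union, filter_union_filter_not_eq]
  refine disjoint_left.mpr fun _ hx' hy' => ?_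
  obtain ⟨x, hx, rfl⟩ := mem_image.mp hx'
  obtain ⟨y, hy, hxy⟩ := mem_image.mp hy'
  rw [mem_filter] at hx hy
  exact hy.2 ((hP x hx.1 y hy.1 (hR.apply_eq_apply_iff.mp hxy.symm)).mp hx.2)

theorem image_filter_self_eq_singleton (hR : Equivalence R) {s : α} (hs : s ∈ S) :
    (S.filter (R s)).image R = {R s} := by
  refine eq_singleton_iff_unique_mem.mpr ⟨mem_image.mpr ⟨s, mem_filter.mpr ⟨hs, hR.refl s⟩, rfl⟩,
    fun _ hx' => ?_⟩
  obtain ⟨x, hx, rfl⟩ := mem_image.mp hx'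
  exact hR.apply_eq_apply_iff.mpr (hR.symm (mem_filter.mp hx).2)

theorem card_image_of_forall_rel_or_rel (hR : Equivalence R) {p q : α} (hp : p ∈ T)
    (hq : q ∈ T) (hcover : ∀ x ∈ T, R p x ∨ R q x) :
    #(T.image R) = if R p q then 1 else 2 := by
  have himage : T.image R = {R p, R q} := by
    ext C
    simp only [mem_image, mem_insert, mem_singleton]
    constructor
    · rintro ⟨x, hx, rfl⟩
      exact (hcover x hx).imp (fun h => (hR.apply_eq_apply_iff.mpr h).symm)
        (fun h => (hR.apply_eq_apply_iff.mpr h).symm)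
    · rintro (rfl | rfl)
      exacts [⟨p, hp, rfl⟩, ⟨q, hq, rfl⟩]
  rw [himage]
  split_ifs with hpq
  · rw [hR.apply_eq_apply_iff.mpr hpq, pair_eq_singleton, card_singleton]
  · exact card_pair fun h => hpq (hR.apply_eq_apply_iff.mp h)

theorem card_image_eq_of_split_class {S' : Finset α} (hR : Equivalence R) (hR' : Equivalence R')
    {s p q : α} (hs : s ∈ S) (hS' : S' ⊆ S) (hout : ∀ x ∈ S, x ∉ S' → R s x) (hp : p ∈ S')
    (hq : q ∈ S') (hsp : R s p) (hsq : R s q) (hle : ∀ x ∈ S', ∀ y ∈ S', R' x y → R x y)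
    (hkeep : ∀ x ∈ S', ∀ y ∈ S', ¬ R s x → R x y → R' x y)
    (hcover : ∀ x ∈ S', R s x → R' p x ∨ R' q x) :
    #(S'.image R') = #(S.image R) + if R' p q then 0 else 1 := by
  have hS'not : S'.filter (¬ R s ·) = S.filter (¬ R s ·) := by
    ext x
    simp only [mem_filter]
    exact ⟨fun h => ⟨hS' h.1, h.2⟩, fun h => ⟨by_contra fun hx => h.2 (hout x h.1 hx), h.2⟩⟩
  have hold := card_image_filter_add_card_image_filter_not hR (S := S) (P := R s)
    fun x _ y _ hxy => ⟨fun h => hR.trans h hxy, fun h => hR.trans h (hR.symm hxy)⟩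
  have hnew := card_image_filter_add_card_image_filter_not hR' (S := S') (P := R s)
    fun x hx y hy hxy =>
      ⟨fun h => hR.trans h (hle x hx y hy hxy), fun h => hR.trans h (hR.symm (hle x hx y hy hxy))⟩
  have hrest : #((S.filter (¬ R s ·)).image R') = #((S.filter (¬ R s ·)).image R) := by
    refine card_image_eq_card_image_of_eq_iff fun x hx y hy => ?_
    rw [← hS'not] at hx hy
    rw [mem_filter] at hx hy
    rw [hR.apply_eq_apply_iff, hR'.apply_eq_apply_iff]
    exact ⟨hle x hx.1 y hy.1, hkeep x hx.1 y hy.1 hx.2⟩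
  have hclass := card_image_of_forall_rel_or_rel hR' (T := S'.filter (R s)) (p := p) (q := q)
    (mem_filter.mpr ⟨hp, hsp⟩) (mem_filter.mpr ⟨hq, hsq⟩)
    fun x hx => hcover x (mem_filter.mp hx).1 (mem_filter.mp hx).2
  rw [image_filter_self_eq_singleton hR hs, card_singleton] at hold
  rw [hS'not, hrest, hclass] at hnew
  split_ifs at hnew ⊢ <;> omega

end Classes

section ReachRemoveP

variable {G : Set (Perm α)} {s t x y : α}

local notation "G'" => (removeP · s t) '' G

theorem involutive_of_mem_image_removeP (hG : ∀ f ∈ G, Involutive f ∧ f s ≠ s ∧ f t ≠ t)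
    (hst : s ≠ t) : ∀ f' ∈ G', Involutive f' := by
  rintro _ ⟨f, hf, rfl⟩
  exact involutive_removeP (hG f hf).1 hst (hG f hf).2.1 (hG f hf).2.2

theorem reach_removeP_apply (hG : ∀ f ∈ G, Involutive f ∧ f s ≠ s ∧ f t ≠ t) (hst : s ≠ t)
    (hreach : Reach G s t) {f : Perm α} (hf : f ∈ G) (x : α) :
    Reach G x (removeP f s t x) := by
  obtain ⟨hfi, hfs, hft⟩ := hG f hf
  have hGi : ∀ f ∈ G, Involutive f := fun f hf => (hG f hf).1
  by_cases hxs : x = s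
  · rw [hxs, removeP_apply_left hst hft]; exact Reach.refl _
  by_cases hxt : x = t
  · rw [hxt, removeP_apply_right hst hft]; exact Reach.refl _
  by_cases hfxs : f x = s
  · have hx : x = f s := by rw [← hfxs, hfi]
    rw [hx, removeP_apply_apply_left hfi hst hfs hft (hx ▸ hxt)]
    exact ((Reach.single hf _).trans (by rwa [hfi])).trans (Reach.single hf t)
  by_cases hfxt : f x = t
  · have hx : x = f t := by rw [← hfxt, hfi]
    have hfs' : f s ≠ t := fun h => hxs (by rw [hx, ← h, hfi])
    rw [hx, removeP_apply_apply_right hfi hst hfs hfs']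
    exact ((Reach.single hf _).trans (by rw [hfi]; exact hreach.symm hGi)).trans
      (Reach.single hf s)
  rw [removeP_apply_of_ne hxs hxt hfxs hfxt]
  exact Reach.single hf x

theorem Reach.of_removeP (hG : ∀ f ∈ G, Involutive f ∧ f s ≠ s ∧ f t ≠ t) (hst : s ≠ t)
    (hreach : Reach G s t) (h : Reach G' x y) : Reach G x y := by
  induction h with
  | refl => exact Reach.refl _
  | tail _ hstep ih =>
    obtain ⟨_, ⟨f, hf, rfl⟩, rfl⟩ := hstep
    exact ih.trans (reach_removeP_apply hG hst hreach hf _)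

theorem Reach.removeP_of_not_reach (hG : ∀ f ∈ G, Involutive f ∧ f s ≠ s ∧ f t ≠ t)
    (hreach : Reach G s t) (hx : ¬ Reach G x s) (h : Reach G x y) : Reach G' x y := by
  have hnot : ∀ {z}, Reach G x z → z ≠ s ∧ z ≠ t := fun hz =>
    ⟨by rintro rfl; exact hx hz, by rintro rfl; exact hx (hz.trans (hreach.symm fun f hf =>
      (hG f hf).1))⟩
  induction h with
  | refl => exact Reach.refl _
  | @tail z _ hz hstep ih =>
    obtain ⟨f, hf, rfl⟩ := hstep
    obtain ⟨hzs, hzt⟩ := hnot hz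
    obtain ⟨hfzs, hfzt⟩ := hnot (hz.tail ⟨f, hf, rfl⟩)
    exact ih.tail ⟨_, ⟨f, hf, rfl⟩, removeP_apply_of_ne hzs hzt hfzs hfzt⟩

theorem Reach.exists_reach_removeP (hG : ∀ f ∈ G, Involutive f ∧ f s ≠ s ∧ f t ≠ t)
    (hst : s ≠ t) (h : Reach G s x) (hxs : x ≠ s) (hxt : x ≠ t) :
    ∃ f ∈ G, f s ≠ t ∧ Reach G' (f s) x := by
  induction h with
  | refl => exact absurd rfl hxs
  | @tail z _ _ hstep ih =>
    obtain ⟨g, hg, rfl⟩ := hstep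
    obtain ⟨hgi, hgs, hgt⟩ := hG g hg
    by_cases hzs : z = s
    · rw [hzs] at hxt ⊢
      exact ⟨g, hg, hxt, Reach.refl _⟩
    by_cases hzt : z = t
    · rw [hzt] at hxs ⊢
      have hgs' : g s ≠ t := fun h => hxs (by rw [← h, hgi])
      have hstep := Reach.single (G := G') ⟨g, hg, rfl⟩ (g s)
      rw [removeP_apply_apply_left hgi hst hgs hgt hgs'] at hstep
      exact ⟨g, hg, hgs', hstep⟩
    obtain ⟨f, hf, hft, hreach⟩ := ih hzs hzt
    exact ⟨f, hf, hft, hreach.tail ⟨_, ⟨g, hg, rfl⟩, removeP_apply_of_ne hzs hzt hxs hxt⟩⟩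

theorem card_image_reach_removeP {S : Finset α}
    (hG : ∀ f ∈ G, Involutive f ∧ f s ≠ s ∧ f t ≠ t) (hst : s ≠ t) (hreach : Reach G s t)
    (hs : s ∈ S) {f g : Perm α} (hf : f ∈ G) (hg : g ∈ G) (hfS : f s ∈ S) (hgS : g s ∈ S)
    (hft : f s ≠ t) (hgt : g s ≠ t) (hcover : ∀ h ∈ G, h s ≠ t → h s = f s ∨ h s = g s) :
    #((S \ {s, t}).image (Reach G')) =
      #(S.image (Reach G)) + if Reach G' (f s) (g s) then 0 else 1 := by
  have hGi : ∀ f ∈ G, Involutive f := fun f hf => (hG f hf).1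
  have hmem : ∀ {h : Perm α}, h ∈ G → h s ∈ S → h s ≠ t → h s ∈ S \ {s, t} := fun hh hS ht =>
    Finset.mem_sdiff.mpr ⟨hS, by simp [(hG _ hh).2.1, ht]⟩
  refine card_image_eq_of_split_class (reach_equivalence hGi)
    (reach_equivalence (involutive_of_mem_image_removeP hG hst)) hs Finset.sdiff_subset
    (fun x hx hx' => ?_) (hmem hf hfS hft) (hmem hg hgS hgt) (Reach.single hf s)
    (Reach.single hg s) (fun x _ y _ h => Reach.of_removeP hG hst hreach h)
    (fun x _ y _ hx hxy => Reach.removeP_of_not_reach hG hreach (fun h => hx (h.symm hGi)) hxy)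
    (fun x hx hsx => ?_)
  · by_cases hxs : x = s
    · exact hxs ▸ Reach.refl x
    · have hxt : x = t := by simpa [hx, hxs] using hx'
      exact hxt ▸ hreach
  · obtain ⟨h, hh, hht, hhx⟩ := hsx.exists_reach_removeP hG hst (by rintro rfl; simp at hx)
      (by rintro rfl; simp at hx)
    rcases hcover h hh hht with hfs | hgs
    exacts [Or.inl (hfs ▸ hhx), Or.inr (hgs ▸ hhx)]

end ReachRemoveP

section StraightEdge

variable {S : Finset α} {b w f : Perm α} {s t x y : α} {J : ℕ}

/-- No edge-side lies in both odd and even position with respect to `y` in its polygon. -/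
theorem mul_zpow_apply_ne (hb : IsPairing S b) (hw : IsPairing S w) (hy : y ∈ S)
    (i : ℤ) : ((b * w) ^ i) y ≠ w y := by
  have hdS : ∀ x, (b * w) x ∈ S ↔ x ∈ S := fun _ => hb.mul_apply_mem_iff hw
  have hconj := mul_zpow_mul_eq_zpow_neg_mul hw.1 hb.1
  have hshift : ∀ m n : ℤ, ((b * w) ^ m) (((b * w) ^ n) y) = ((b * w) ^ (m + n)) y := fun m n => by
    rw [← Perm.mul_apply, ← zpow_add]
  have hw_d : ∀ m : ℤ, w (((b * w) ^ m) y) = ((b * w) ^ (-m)) (w y) := fun m => by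
    rw [← Perm.mul_apply, hconj, Perm.mul_apply]
  intro h
  obtain ⟨q, rfl | rfl⟩ := Int.even_or_odd' i
  · -- `(b * w) ^ q y` would be a fixed point of `w`
    apply hw.apply_ne (zpow_apply_mem hdS q hy)
    rw [hw_d, ← h, hshift]
    congr 2; ring
  · -- `w ((b * w) ^ q y)` would be a fixed point of `b`
    apply hb.apply_ne (hw.apply_mem (zpow_apply_mem hdS q hy))
    have hbw : ∀ z, b (w z) = ((b * w) ^ (1 : ℤ)) z := fun z => by
      rw [zpow_one, Perm.mul_apply]
    rw [hbw, hshift, hw_d, ← h, hshift]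
    congr 2; ring

theorem apply_apply_mul_zpow_apply (k : ℤ) (x : α) :
    b (w (((b * w) ^ k) x)) = ((b * w) ^ (k + 1)) x := by
  rw [add_comm, zpow_add, zpow_one, Perm.mul_apply, Perm.mul_apply]

theorem apply_mul_zpow_apply (hb : Involutive b) (k : ℤ) (x : α) :
    b (((b * w) ^ k) x) = w (((b * w) ^ (k - 1)) x) := by
  rw [← hb (w _), apply_apply_mul_zpow_apply, sub_add_cancel]

theorem zpow_apply_ne_self_of_forall_ne (hJ : (f ^ (J : ℤ)) x = t)
    (hmin : ∀ k : ℤ, 0 ≤ k → k < J → (f ^ k) x ≠ t) {k : ℤ} (hk0 : 0 < k) (hkJ : k ≤ J) :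
    (f ^ k) x ≠ x := fun h =>
  hmin (J - k) (by omega) (by omega) (by
    rw [← hJ, ← sub_add_cancel (J : ℤ) k, zpow_add, Perm.mul_apply, h, sub_add_cancel])

/-- The edge-sides `x, w x, b w x, w b w x, …` met in `2 J` steps along the polygon of
`L(b, w)` through `x`. -/
def faceArc (b w : Perm α) (x : α) (J : ℕ) : Set α :=
  {y | ∃ k : ℤ, 0 ≤ k ∧ k < J ∧ (y = ((b * w) ^ k) x ∨ y = w (((b * w) ^ k) x))}

theorem apply_mem_faceArc (hw : Involutive w) (hy : y ∈ faceArc b w x J) :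
    w y ∈ faceArc b w x J := by
  obtain ⟨k, hk0, hkJ, rfl | rfl⟩ := hy
  exacts [⟨k, hk0, hkJ, Or.inr rfl⟩, ⟨k, hk0, hkJ, Or.inl (hw _)⟩]

theorem ne_and_ne_of_mem_faceArc (hb : IsPairing S b) (hw : IsPairing S w) (hs : s ∈ S)
    (hJ : ((b * w) ^ (J : ℤ)) (b s) = t)
    (hmin : ∀ k : ℤ, 0 ≤ k → k < J → ((b * w) ^ k) (b s) ≠ t) (hy : y ∈ faceArc b w (b s) J) :
    y ≠ s ∧ y ≠ t := by
  have hdS : ∀ x, (b * w) x ∈ S ↔ x ∈ S := fun _ => hb.mul_apply_mem_iff hw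
  have hparity : ∀ k m : ℤ, ((b * w) ^ k) (b s) ≠ w (((b * w) ^ m) (b s)) := fun k m h =>
    mul_zpow_apply_ne hb hw (zpow_apply_mem hdS m (hb.apply_mem hs)) (k - m)
      (by rw [← Perm.mul_apply, ← zpow_add, sub_add_cancel, h])
  have hs_eq : s = w (((b * w) ^ (-1 : ℤ)) (b s)) := by
    rw [← zero_sub, ← apply_mul_zpow_apply hb.1, zpow_zero, Perm.one_apply, hb.1]
  obtain ⟨k, hk0, hkJ, rfl | rfl⟩ := hy
  · exact ⟨fun h => hparity k (-1) (h.trans hs_eq), hmin k hk0 hkJ⟩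
  · refine ⟨fun h => zpow_apply_ne_self_of_forall_ne hJ hmin (k := k + 1) (by omega) (by omega) ?_,
      hJ ▸ (hparity J k).symm⟩
    rw [← apply_apply_mul_zpow_apply, h]

theorem removeP_apply_eq_of_mem_faceArc (hb : IsPairing S b) (hw : IsPairing S w) (hs : s ∈ S)
    (hJ : ((b * w) ^ (J : ℤ)) (b s) = t)
    (hmin : ∀ k : ℤ, 0 ≤ k → k < J → ((b * w) ^ k) (b s) ≠ t) (hy : y ∈ faceArc b w (b s) J)
    (hfy : f y ∈ faceArc b w (b s) J) : removeP f s t y = f y := by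
  obtain ⟨hys, hyt⟩ := ne_and_ne_of_mem_faceArc hb hw hs hJ hmin hy
  obtain ⟨hfys, hfyt⟩ := ne_and_ne_of_mem_faceArc hb hw hs hJ hmin hfy
  exact removeP_apply_of_ne hys hyt hfys hfyt

theorem removeP_left_mem_faceArc (hb : IsPairing S b) (hw : IsPairing S w) (hs : s ∈ S)
    (ht : t ∈ S) (hst : s ≠ t) (hJ : ((b * w) ^ (J : ℤ)) (b s) = t)
    (hmin : ∀ k : ℤ, 0 ≤ k → k < J → ((b * w) ^ k) (b s) ≠ t) (hy : y ∈ faceArc b w (b s) J) :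
    removeP b s t y ∈ faceArc b w (b s) J := by
  have hbs : 0 < J → b s ≠ t := fun hJ0 => by simpa using hmin 0 le_rfl (by omega)
  obtain ⟨k, hk0, hkJ, rfl | rfl⟩ := hy
  · rcases hk0.eq_or_lt with rfl | hk
    · rw [zpow_zero, Perm.one_apply, removeP_apply_apply_left hb.1 hst (hb.apply_ne hs)
        (hb.apply_ne ht) (hbs (by omega)), ← hJ, apply_mul_zpow_apply hb.1]
      exact ⟨J - 1, by omega, by omega, Or.inr rfl⟩
    · have hmem : b (((b * w) ^ k) (b s)) ∈ faceArc b w (b s) J := by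
        rw [apply_mul_zpow_apply hb.1]; exact ⟨k - 1, by omega, by omega, Or.inr rfl⟩
      rwa [removeP_apply_eq_of_mem_faceArc hb hw hs hJ hmin ⟨k, hk0, hkJ, Or.inl rfl⟩ hmem]
  · rcases (show k + 1 < J ∨ k + 1 = J by omega) with hk | hk
    · have hmem : b (w (((b * w) ^ k) (b s))) ∈ faceArc b w (b s) J := by
        rw [apply_apply_mul_zpow_apply]; exact ⟨k + 1, by omega, hk, Or.inl rfl⟩
      rwa [removeP_apply_eq_of_mem_faceArc hb hw hs hJ hmin ⟨k, hk0, hkJ, Or.inr rfl⟩ hmem]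
    · have hbt : w (((b * w) ^ k) (b s)) = b t := by
        rw [← hJ, ← hk, ← apply_apply_mul_zpow_apply, hb.1]
      rw [hbt, removeP_apply_apply_right hb.1 hst (hb.apply_ne hs) (hbs (by omega))]
      exact ⟨0, le_rfl, by omega, Or.inl (by simp)⟩

theorem removeP_right_mem_faceArc (hb : IsPairing S b) (hw : IsPairing S w) (hs : s ∈ S)
    (hJ : ((b * w) ^ (J : ℤ)) (b s) = t)
    (hmin : ∀ k : ℤ, 0 ≤ k → k < J → ((b * w) ^ k) (b s) ≠ t) (hy : y ∈ faceArc b w (b s) J) :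
    removeP w s t y ∈ faceArc b w (b s) J := by
  rw [removeP_apply_eq_of_mem_faceArc hb hw hs hJ hmin hy (apply_mem_faceArc hw.1 hy)]
  exact apply_mem_faceArc hw.1 hy

theorem not_reach_removeP_of_evenPos (hb : IsPairing S b) (hw : IsPairing S w) (hs : s ∈ S)
    (ht : t ∈ S) (hst : s ≠ t) (heven : EvenPos b w s t) (hbs : b s ≠ t) :
    ¬ Reach {removeP b s t, removeP w s t} (b s) (w s) := by
  have hdS : ∀ x, (b * w) x ∈ S ↔ x ∈ S := fun _ => hb.mul_apply_mem_iff hw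
  have hex : ∃ n : ℕ, ((b * w) ^ (n : ℤ)) (b s) = t := by
    refine Perm.SameCycle.exists_nat_pow_eq_of_mem hdS (hb.apply_mem hs) ht ?_
    obtain ⟨j, rfl⟩ := heven
    refine ⟨-j, ?_⟩
    rw [zpow_neg, ← inv_zpow, mul_inv_rev, Perm.inv_eq_self_of_involutive hw.1,
      Perm.inv_eq_self_of_involutive hb.1, Perm.mul_apply]
  classical
  have hJ : ((b * w) ^ (Nat.find hex : ℤ)) (b s) = t := Nat.find_spec hex
  have hmin : ∀ k : ℤ, 0 ≤ k → k < Nat.find hex → ((b * w) ^ k) (b s) ≠ t :=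
    fun k hk0 hkJ h => Nat.find_min hex (m := k.toNat) (by omega)
      (by rwa [Int.toNat_of_nonneg hk0])
  have hJ0 : (0 : ℤ) < Nat.find hex := by
    rcases Nat.eq_zero_or_pos (Nat.find hex) with h | h
    · rw [h, Nat.cast_zero, zpow_zero, Perm.one_apply] at hJ
      exact absurd hJ hbs
    · exact_mod_cast h
  have hbs_mem : b s ∈ faceArc b w (b s) (Nat.find hex) := ⟨0, le_rfl, hJ0, Or.inl (by simp)⟩
  intro hreach
  obtain ⟨k, hk0, hkJ, hk | hk⟩ := hreach.of_closed (A := (· ∈ faceArc b w (b s) (Nat.find hex)))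
    (by rintro _ (rfl | rfl) y hy
        exacts [removeP_left_mem_faceArc hb hw hs ht hst hJ hmin hy,
          removeP_right_mem_faceArc hb hw hs hJ hmin hy]) hbs_mem
  · refine zpow_apply_ne_self_of_forall_ne hJ hmin (k := k + 1) (by omega) (by omega) ?_
    rw [← apply_apply_mul_zpow_apply, ← hk, hw.1]
  · exact (ne_and_ne_of_mem_faceArc hb hw hs hJ hmin ⟨k, hk0, hkJ, Or.inl rfl⟩).1
      (w.injective hk).symm

end StraightEdge

section Map

variable {S : Finset α} {b w e f : Perm α} {s t : α}

theorem numFaces_eq_card_image_reach (hb : Involutive b) (hw : Involutive w) :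
    numFaces S b w = #(S.image (Reach {b, w})) := by
  have h : SameFace b w = Reach {b, w} := funext₂ fun _ _ => propext (sameFace_iff_reach hb hw)
  rw [← card_image_filter_eq_card_image (reach_equivalence (by simp [hb, hw])), ← h]
  rfl

theorem numComponents_eq_card_image_reach (hb : Involutive b) (hw : Involutive w)
    (he : Involutive e) : numComponents S b w e = #(S.image (Reach {b, w, e})) := by
  have h : SameComponent b w e = Reach {b, w, e} :=
    funext₂ fun _ _ => propext (sameComponent_iff_reach hb hw he)
  rw [← card_image_filter_eq_card_image (reach_equivalence (by simp [hb, hw, he])), ← h]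
  rfl

theorem numEdges_sdiff (he : IsPairing S e) (hs : s ∈ S) :
    numEdges S = numEdges (S \ {s, e s}) + 1 := by
  have hsub : {s, e s} ⊆ S := insert_subset hs (singleton_subset_iff.mpr (he.apply_mem hs))
  have hcard : #({s, e s} : Finset α) = 2 := card_pair (he.apply_ne hs).symm
  have := card_le_card hsub
  rw [numEdges, numEdges, card_sdiff_of_subset hsub, hcard]
  omega

theorem numFaces_removeP_of_evenPos (hb : IsPairing S b) (hw : IsPairing S w) (hs : s ∈ S)
    (ht : t ∈ S) (hst : s ≠ t) (heven : EvenPos b w s t) (hbs : b s ≠ t) (hws : w s ≠ t) :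
    numFaces (S \ {s, t}) (removeP b s t) (removeP w s t) = numFaces S b w + 1 := by
  have hG : ∀ f ∈ ({b, w} : Set (Perm α)), Involutive f ∧ f s ≠ s ∧ f t ≠ t := by
    rintro f (rfl | rfl)
    exacts [hb.involutive_and_apply_ne hs ht, hw.involutive_and_apply_ne hs ht]
  have hreach : Reach {b, w} s t := (sameFace_iff_reach hb.1 hw.1).mp (Or.inl heven)
  have himage : (removeP · s t) '' {b, w} = {removeP b s t, removeP w s t} := by
    simp [Set.image_insert_eq]
  rw [numFaces_eq_card_image_reach (hb.involutive_removeP hs ht hst)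
      (hw.involutive_removeP hs ht hst),
    numFaces_eq_card_image_reach hb.1 hw.1, ← himage,
    card_image_reach_removeP hG hst hreach hs (f := b) (g := w) (by simp) (by simp)
      (hb.apply_mem hs) (hw.apply_mem hs) hbs hws (by rintro f (rfl | rfl) _ <;> simp),
    himage, if_neg (not_reach_removeP_of_evenPos hb hw hs ht hst heven hbs)]

theorem numFaces_removeP_edge (hf : IsPairing S f) (he : IsPairing S e) (hs : s ∈ S)
    (hfs : f s ≠ e s) :
    numFaces (S \ {s, e s}) (removeP f s (e s)) (removeP e s (e s)) = numFaces S f e := by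
  have ht := he.apply_mem hs
  have hst : s ≠ e s := (he.apply_ne hs).symm
  have hG : ∀ g ∈ ({f, e} : Set (Perm α)), Involutive g ∧ g s ≠ s ∧ g (e s) ≠ e s := by
    rintro g (rfl | rfl)
    exacts [hf.involutive_and_apply_ne hs ht, he.involutive_and_apply_ne hs ht]
  have himage : (removeP · s (e s)) '' {f, e} = {removeP f s (e s), removeP e s (e s)} := by
    simp [Set.image_insert_eq]
  rw [numFaces_eq_card_image_reach (hf.involutive_removeP hs ht hst)
      (he.involutive_removeP hs ht hst),
    numFaces_eq_card_image_reach hf.1 he.1, ← himage,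
    card_image_reach_removeP hG hst (Reach.single (by simp) s) hs (f := f) (g := f) (by simp)
      (by simp) (hf.apply_mem hs) (hf.apply_mem hs) hfs hfs
      (by rintro g (rfl | rfl) hg; exacts [Or.inl rfl, absurd rfl hg]),
    if_pos (Reach.refl _), add_zero]

theorem numComponents_removeP (hb : IsPairing S b) (hw : IsPairing S w) (he : IsPairing S e)
    (hs : s ∈ S) (hbs : b s ≠ e s) (hws : w s ≠ e s) :
    numComponents (S \ {s, e s}) (removeP b s (e s)) (removeP w s (e s)) (removeP e s (e s))
        = numComponents S b w e ∨
      numComponents (S \ {s, e s}) (removeP b s (e s)) (removeP w s (e s)) (removeP e s (e s))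
        = numComponents S b w e + 1 := by
  have ht := he.apply_mem hs
  have hst : s ≠ e s := (he.apply_ne hs).symm
  have hG : ∀ g ∈ ({b, w, e} : Set (Perm α)), Involutive g ∧ g s ≠ s ∧ g (e s) ≠ e s := by
    rintro g (rfl | rfl | rfl)
    exacts [hb.involutive_and_apply_ne hs ht, hw.involutive_and_apply_ne hs ht,
      he.involutive_and_apply_ne hs ht]
  have himage : (removeP · s (e s)) '' {b, w, e} =
      {removeP b s (e s), removeP w s (e s), removeP e s (e s)} := by
    simp [Set.image_insert_eq]
  rw [numComponents_eq_card_image_reach (hb.involutive_removeP hs ht hst)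
      (hw.involutive_removeP hs ht hst) (he.involutive_removeP hs ht hst),
    numComponents_eq_card_image_reach hb.1 hw.1 he.1, ← himage,
    card_image_reach_removeP hG hst (Reach.single (by simp) s) hs (f := b) (g := w) (by simp)
      (by simp) (hb.apply_mem hs) (hw.apply_mem hs) hbs hws
      (by rintro g (rfl | rfl | rfl) hg; exacts [Or.inl rfl, Or.inr rfl, absurd rfl hg])]
  split_ifs <;> simp

theorem numVertices_removeP (hb : IsPairing S b) (hw : IsPairing S w) (he : IsPairing S e)
    (hs : s ∈ S) (hbs : b s ≠ e s) (hws : w s ≠ e s) :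
    numVertices (S \ {s, e s}) (removeP b s (e s)) (removeP w s (e s)) (removeP e s (e s)) =
      numVertices S b w e := by
  rw [numVertices, numVertices, numFaces_removeP_edge hb he hs hbs,
    numFaces_removeP_edge hw he hs hws]

end Map

/-- if `E₀ = {s, e s}` is a straight edge of the map `M = (S,b,w,e)`
none of whose extremities is a leaf, then `M \ E₀` has one fewer edge and one more
face than `M`, the same number of vertices, and its number of connected components
either equals that of `M` or exceeds it by `1`; consequently
`d(M \ E₀) ∈ {d(M) - 2, d(M)}`. -/
theorem remove_straight_edge_no_leaf (S : Finset α) (b w e : Equiv.Perm α)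
    (hb : IsPairing S b) (hw : IsPairing S w) (he : IsPairing S e)
    (s : α) (hs : s ∈ S)
    (hstraight : IsStraight b w s (e s))
    (hnoblackleaf : b s ≠ e s) (hnowhiteleaf : w s ≠ e s) :
    numEdges S = numEdges (S \ {s, e s}) + 1 ∧
    numFaces (S \ {s, e s}) (removeP b s (e s)) (removeP w s (e s))
      = numFaces S b w + 1 ∧
    numVertices (S \ {s, e s}) (removeP b s (e s)) (removeP w s (e s))
        (removeP e s (e s)) = numVertices S b w e ∧
    (numComponents (S \ {s, e s}) (removeP b s (e s)) (removeP w s (e s))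
        (removeP e s (e s)) = numComponents S b w e ∨
      numComponents (S \ {s, e s}) (removeP b s (e s)) (removeP w s (e s))
        (removeP e s (e s)) = numComponents S b w e + 1) ∧
    (dInv (S \ {s, e s}) (removeP b s (e s)) (removeP w s (e s)) (removeP e s (e s))
        = dInv S b w e - 2 ∨
      dInv (S \ {s, e s}) (removeP b s (e s)) (removeP w s (e s)) (removeP e s (e s))
        = dInv S b w e) := by
  have hE := numEdges_sdiff he hs
  have hF := numFaces_removeP_of_evenPos hb hw hs (he.apply_mem hs) (he.apply_ne hs).symm
    hstraight.2 hnoblackleaf hnowhiteleaf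
  have hV := numVertices_removeP hb hw he hs hnoblackleaf hnowhiteleaf
  have hC := numComponents_removeP hb hw he hs hnoblackleaf hnowhiteleaf
  refine ⟨hE, hF, hV, hC, ?_⟩
  simp only [dInv, eulerChar, hE, hF, hV]
  rcases hC with hC | hC <;> rw [hC] <;> push_cast
  · left; ring
  · right; ring

end
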